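/- Let X be a finite set with a distinguished element x₀, Y a finite set, and W a channel assigning to each x ∈ X a pmf W(·|x) on Y with W(y|x₀) > 0 for all y. Let A and B be disjoint nonempty finite sets with U = A ∪ B, P_U^A a pmf on A, P_U^B a pmf on B; for each u ∈ A let P̃_{X|U}(·|u) be a pmf on X with P̃_{X|U}(x₀|u) = 0, and for each u ∈ B let P_{X|U}(·|u) be a pmf on X. For (μ₁,μ₂) ∈ ℝ² define Q^{μ₁,μ₂} : U × X → ℝ by Q^{μ₁,μ₂}(u,x) = (1−μ₁)·P_U^A(u)·((1−μ₂)·1{x=x₀} + μ₂·P̃_{X|U}(x|u)) for u ∈ A and Q^{μ₁,μ₂}(u,x) = μ₁·P_U^B(u)·P_{X|U}(x|u) for u ∈ B, with U-marginal Q_U(u) = ∑_x Q^{μ₁,μ₂}(u,x). Define the conditional mutual information J(μ₁,μ₂) = ∑_{u,x,y} Q^{μ₁,μ₂}(u,x)·W(y|x)·(Real.log(W(y|x)) + Real.log(Q_U(u)) − Real.log(∑_{x'} Q^{μ₁,μ₂}(u,x')·W(y|x'))). Set P̃ᴬ_X(x) = ∑_{u∈A} P_U^A(u)·P̃_{X|U}(x|u).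 Then the map μ₂ ↦ J(0, μ₂) has a derivative at μ₂ = 0, equal to ∑_{x∈X} P̃ᴬ_X(x)·D(W(·|x) ‖ W(·|x₀)). -/

import Mathlib

/-
At `μ₁ = 0` the conditional mutual information splits as
`J(0, μ) = ∑_{u ∈ A} P_U^A(u) · I(q_{u,μ}; W)` with `q_{u,μ} = (1 - μ) δ_{x₀} + μ P̃(·|u)`.
Writing `I(q; W) = ∑_x q(x) D(W(·|x) ‖ qW)`, the product rule at `μ = 0` (where `qW = W(·|x₀)`)
gives `∑_x (P̃(x|u) - δ_{x₀}(x)) D(W(·|x) ‖ W(·|x₀))` plus the derivative of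
`D(W(·|x₀) ‖ q_{u,μ}W)`, which is `-∑_y (P̃W(y|u) - W(y|x₀)) = 0`.
-/

open Real

/-- Kullback–Leibler divergence of finite-alphabet "distributions" `p`, `q`. -/
noncomputable def klDiv {Z : Type*} [Fintype Z] (p q : Z → ℝ) : ℝ :=
  ∑ z, p z * (Real.log (p z) - Real.log (q z))

open Finset Filter Topology

theorem klDiv_self {Z : Type*} [Fintype Z] (p : Z → ℝ) : klDiv p p = 0 := by
  simp [klDiv]

theorem hasDerivAt_klDiv_right {Z : Type*} [Fintype Z] (p : Z → ℝ) {q : ℝ → Z → ℝ}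
    {q' : Z → ℝ} {μ : ℝ} (hq : ∀ z, HasDerivAt (fun μ => q μ z) (q' z) μ)
    (hq0 : ∀ z, q μ z ≠ 0) :
    HasDerivAt (fun μ => klDiv p (q μ)) (-∑ z, p z * q' z / q μ z) μ := by
  have := HasDerivAt.fun_sum (u := univ) fun z _ =>
    (((hq z).log (hq0 z)).const_sub (log (p z))).const_mul (p z)
  simpa [klDiv, mul_neg, mul_div_assoc] using this

section Channel

variable {X Y : Type*}

section Mixture

variable [DecidableEq X]

def mixDirac (x₀ : X) (p : X → ℝ) (μ : ℝ) (x : X) : ℝ :=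
  (1 - μ) * (if x = x₀ then 1 else 0) + μ * p x

theorem hasDerivAt_mixDirac (x₀ : X) (p : X → ℝ) (x : X) (μ : ℝ) :
    HasDerivAt (fun μ => mixDirac x₀ p μ x) (p x - if x = x₀ then 1 else 0) μ :=
  ((((hasDerivAt_id μ).const_sub 1).mul_const (if x = x₀ then (1 : ℝ) else 0)).add
    ((hasDerivAt_id μ).mul_const (p x))).congr_deriv (by ring)

end Mixture

variable [Fintype X]

noncomputable def outputDist (W : X → Y → ℝ) (q : X → ℝ) (y : Y) : ℝ := ∑ x, q x * W x y

noncomputable def mutualInfo [Fintype Y] (W : X → Y → ℝ) (q : X → ℝ) : ℝ :=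
  ∑ x, q x * klDiv (W x) (outputDist W q)

/-- `I(X; Y | U)` for the (unnormalized) joint law `Q u x` of `(U, X)` and the channel `W`. -/
noncomputable def condMutualInfo {U : Type*} [Fintype U] [Fintype Y] (W : X → Y → ℝ)
    (Q : U → X → ℝ) : ℝ :=
  ∑ u, ∑ x, ∑ y, Q u x * W x y *
    (log (W x y) + log (∑ x', Q u x') - log (outputDist W (Q u) y))

theorem sum_outputDist [Fintype Y] {W : X → Y → ℝ} (hW : ∀ x, ∑ y, W x y = 1) (q : X → ℝ) :
    ∑ y, outputDist W q y = ∑ x, q x := by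
  simp only [outputDist]
  rw [sum_comm]
  simp [← mul_sum, hW]

theorem outputDist_const_mul (W : X → Y → ℝ) (c : ℝ) (q : X → ℝ) (y : Y) :
    outputDist W (fun x => c * q x) y = c * outputDist W q y := by
  simp only [outputDist, mul_sum, mul_assoc]

theorem condMutualInfo_mul {U : Type*} [Fintype U] [Fintype Y] (W : X → Y → ℝ) (c : U → ℝ)
    (q : U → X → ℝ)
    (hq : ∀ u, c u ≠ 0 → ∑ x, q u x = 1)
    (ho : ∀ u, c u ≠ 0 → ∀ y, outputDist W (q u) y ≠ 0) :
    condMutualInfo W (fun u x => c u * q u x) = ∑ u, c u * mutualInfo W (q u) := by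
  refine sum_congr rfl fun u _ => ?_
  rcases eq_or_ne (c u) 0 with hc | hc
  · simp [hc]
  have hlog : ∀ y, log (∑ x', c u * q u x') - log (outputDist W (fun x => c u * q u x) y)
      = - log (outputDist W (q u) y) := by
    intro y
    rw [← mul_sum, hq u hc, mul_one, outputDist_const_mul, log_mul hc (ho u hc y)]
    ring
  simp only [mutualInfo, klDiv, mul_sum, add_sub_assoc, hlog]
  refine sum_congr rfl fun x _ => sum_congr rfl fun y _ => ?_
  ring

variable [DecidableEq X]

theorem sum_mixDirac (x₀ : X) {p : X → ℝ} (hp : ∑ x, p x = 1) (μ : ℝ) :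
    ∑ x, mixDirac x₀ p μ x = 1 := by
  simp [mixDirac, sum_add_distrib, ← mul_sum, hp]

theorem outputDist_mixDirac (W : X → Y → ℝ) (x₀ : X) (p : X → ℝ) (μ : ℝ) (y : Y) :
    outputDist W (mixDirac x₀ p μ) y = (1 - μ) * W x₀ y + μ * outputDist W p y := by
  simp [outputDist, mixDirac, add_mul, sum_add_distrib, mul_assoc, ← mul_sum]

theorem hasDerivAt_outputDist_mixDirac (W : X → Y → ℝ) (x₀ : X) (p : X → ℝ) (y : Y) (μ : ℝ) :
    HasDerivAt (fun μ => outputDist W (mixDirac x₀ p μ) y) (outputDist W p y - W x₀ y) μ := by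
  simp only [outputDist_mixDirac]
  exact ((((hasDerivAt_id μ).const_sub 1).mul_const (W x₀ y)).add
      ((hasDerivAt_id μ).mul_const (outputDist W p y))).congr_deriv (by ring)

theorem eventually_outputDist_mixDirac_pos [Fintype Y] {W : X → Y → ℝ} {x₀ : X}
    (hpos : ∀ y, 0 < W x₀ y) (p : X → ℝ) :
    ∀ᶠ μ in 𝓝 0, ∀ y, 0 < outputDist W (mixDirac x₀ p μ) y := by
  refine eventually_all.2 fun y => ?_
  have hcont : ContinuousAt (fun μ => outputDist W (mixDirac x₀ p μ) y) 0 :=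
    (hasDerivAt_outputDist_mixDirac W x₀ p y 0).continuousAt
  exact hcont.eventually (eventually_gt_nhds (by simpa [outputDist_mixDirac] using hpos y))

theorem hasDerivAt_mutualInfo_mixDirac [Fintype Y] {W : X → Y → ℝ}
    (hW : ∀ x, ∑ y, W x y = 1) {x₀ : X} (hpos : ∀ y, 0 < W x₀ y) {p : X → ℝ} (hp : ∑ x, p x = 1) :
    HasDerivAt (fun μ => mutualInfo W (mixDirac x₀ p μ)) (∑ x, p x * klDiv (W x) (W x₀)) 0 := by
  have ho : outputDist W (mixDirac x₀ p 0) = W x₀ := by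
    ext y; simp [outputDist_mixDirac]
  have hmi := HasDerivAt.fun_sum (u := univ) fun x _ =>
    (hasDerivAt_mixDirac x₀ p x 0).mul (hasDerivAt_klDiv_right (W x)
      (hasDerivAt_outputDist_mixDirac W x₀ p · 0) (fun y => ho ▸ (hpos y).ne'))
  have hcancel : ∀ y, W x₀ y * (outputDist W p y - W x₀ y) / W x₀ y
      = outputDist W p y - W x₀ y :=
    fun y => mul_div_cancel_left₀ _ (hpos y).ne'
  refine hmi.congr_deriv ?_
  -- The `δ_{x₀}` term is `-∑ y, (outputDist W p y - W x₀ y)`, which vanishes as both are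
  -- probability vectors; and `klDiv (W x₀) (W x₀) = 0`.
  simp [ho, mixDirac, sub_mul, ite_mul, sum_add_distrib, sum_sub_distrib, klDiv_self, hcancel,
    sum_outputDist hW, hp, hW]

end Channel

theorem stmt_7_general {U X Y : Type*} [Fintype U] [Fintype X] [Fintype Y]
    [DecidableEq U] [DecidableEq X]
    (x₀ : X) (W : X → Y → ℝ)
    (hW1 : ∀ x, ∑ y, W x y = 1) (hWpos : ∀ y, 0 < W x₀ y)
    (A : Finset U)
    (PUA PUB : U → ℝ)
    (PtXU PXU : U → X → ℝ)
    (hPt1 : ∀ u ∈ A, ∑ x, PtXU u x = 1)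
    (Q : ℝ → ℝ → U → X → ℝ)
    (hQ : ∀ μ₁ μ₂ u x, Q μ₁ μ₂ u x =
      if u ∈ A then
        (1 - μ₁) * PUA u * ((1 - μ₂) * (if x = x₀ then 1 else 0) + μ₂ * PtXU u x)
      else μ₁ * PUB u * PXU u x)
    (J : ℝ → ℝ → ℝ)
    (hJ : ∀ μ₁ μ₂, J μ₁ μ₂ = ∑ u, ∑ x, ∑ y, Q μ₁ μ₂ u x * W x y *
      (Real.log (W x y) + Real.log (∑ x', Q μ₁ μ₂ u x')
        - Real.log (∑ x', Q μ₁ μ₂ u x' * W x' y))) :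
    HasDerivAt (fun μ₂ => J 0 μ₂)
      (∑ x, (∑ u ∈ A, PUA u * PtXU u x) * klDiv (W x) (W x₀)) 0 := by
  have hQ0 : ∀ μ,
      Q 0 μ = fun u x => (if u ∈ A then PUA u else 0) * mixDirac x₀ (PtXU u) μ x := by
    intro μ; ext u x; rw [hQ, mixDirac]; split_ifs <;> ring
  have hJA : (fun μ => J 0 μ) =ᶠ[𝓝 0]
      fun μ => ∑ u ∈ A, PUA u * mutualInfo W (mixDirac x₀ (PtXU u) μ) := by
    filter_upwards [eventually_all.2 fun u => eventually_outputDist_mixDirac_pos hWpos (PtXU u)]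
      with μ hμ
    rw [hJ]
    change condMutualInfo W (Q 0 μ) = _
    rw [hQ0, condMutualInfo_mul _ _ _
      (fun u hu => sum_mixDirac x₀ (hPt1 u (by_contra fun h => hu (if_neg h))) μ)
      (fun u _ y => (hμ u y).ne')]
    simp only [ite_mul, zero_mul, sum_ite_mem, univ_inter]
  have hderiv := HasDerivAt.fun_sum (u := A) fun u hu =>
    (hasDerivAt_mutualInfo_mixDirac hW1 hWpos (hPt1 u hu)).const_mul (PUA u)
  refine (hderiv.congr_of_eventuallyEq hJA).congr_deriv ?_
  simp only [mul_sum, sum_mul, mul_assoc]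
  exact sum_comm

theorem stmt_7 {U X Y : Type*} [Fintype U] [Fintype X] [Fintype Y]
    [DecidableEq U] [DecidableEq X]
    (x₀ : X) (W : X → Y → ℝ)
    (hW0 : ∀ x y, 0 ≤ W x y) (hW1 : ∀ x, ∑ y, W x y = 1) (hWpos : ∀ y, 0 < W x₀ y)
    (A B : Finset U) (hdisj : Disjoint A B) (hAne : A.Nonempty) (hBne : B.Nonempty)
    (hcover : A ∪ B = Finset.univ)
    (PUA PUB : U → ℝ)
    (hPUA0 : ∀ u ∈ A, 0 ≤ PUA u) (hPUA1 : ∑ u ∈ A, PUA u = 1)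
    (hPUB0 : ∀ u ∈ B, 0 ≤ PUB u) (hPUB1 : ∑ u ∈ B, PUB u = 1)
    (PtXU PXU : U → X → ℝ)
    (hPt0 : ∀ u ∈ A, ∀ x, 0 ≤ PtXU u x) (hPt1 : ∀ u ∈ A, ∑ x, PtXU u x = 1)
    (hPtx0 : ∀ u ∈ A, PtXU u x₀ = 0)
    (hP0 : ∀ u ∈ B, ∀ x, 0 ≤ PXU u x) (hP1 : ∀ u ∈ B, ∑ x, PXU u x = 1)
    (Q : ℝ → ℝ → U → X → ℝ)
    (hQ : ∀ μ₁ μ₂ u x, Q μ₁ μ₂ u x =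
      if u ∈ A then
        (1 - μ₁) * PUA u * ((1 - μ₂) * (if x = x₀ then 1 else 0) + μ₂ * PtXU u x)
      else μ₁ * PUB u * PXU u x)
    (J : ℝ → ℝ → ℝ)
    (hJ : ∀ μ₁ μ₂, J μ₁ μ₂ = ∑ u, ∑ x, ∑ y, Q μ₁ μ₂ u x * W x y *
      (Real.log (W x y) + Real.log (∑ x', Q μ₁ μ₂ u x')
        - Real.log (∑ x', Q μ₁ μ₂ u x' * W x' y))) :
    HasDerivAt (fun μ₂ => J 0 μ₂)
      (∑ x, (∑ u ∈ A, PUA u * PtXU u x) * klDiv (W x) (W x₀)) 0 :=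
  stmt_7_general x₀ W hW1 hWpos A PUA PUB PtXU PXU hPt1 Q hQ J hJ
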